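/- Let ρ be an elliptic N-function. Then for each δ > 0 there exists C_δ ≥ 1, depending only on δ and the characteristics of ρ, such that for all vectors a, b ∈ ℝⁿ and all t ≥ 0: ρ_{|a|}(t) ≤ C_δ ρ_{|b|}(t) + δ ρ_{|a|}(|a − b|). -/

import Mathlib

/-!
The shifted functions are integrals of the increasing integrands `τ ↦ ρ'(a+τ) τ / (a+τ)`.
Put `ε = min δ 1`. If `t ≤ ε |a - b|`, convexity of `ρ_{|a|}` (the average of an increasing
function over `[0,t]` is at most its average over `[0,|a - b|]`) already gives
`ρ_{|a|}(t) ≤ δ ρ_{|a|}(|a - b|)`. Otherwise `||a| - |b|| ≤ |a - b| < t / ε`, so for `τ ∈ [t/2, t]`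
the points `|a| + τ` and `|b| + τ` are within the factor `L = 1 + 2/ε` of each other. Since
`t ρ'' ≤ c₂ ρ'` makes `x ↦ x^(-c₂) ρ'(x)` decreasing, the two integrands differ by at most
`L^(c₂+1)` there, and because the integrand increases, `[t/2, t]` carries at least half of
the integral over `[0, t]`.
-/

open Set Filter

/-- An N-function: strictly increasing and convex on `[0,∞)`, vanishing at `0`,
with `ρ(t)/t → 0` as `t → 0⁺` and `t/ρ(t) → 0` as `t → ∞`. -/
def IsNFunction (ρ : ℝ → ℝ) : Prop :=
  ρ 0 = 0 ∧ StrictMonoOn ρ (Ici 0) ∧ ConvexOn ℝ (Ici 0) ρ ∧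
    Tendsto (fun t => ρ t / t) (nhdsWithin 0 (Ioi 0)) (nhds 0) ∧
    Tendsto (fun t => t / ρ t) atTop (nhds 0)

/-- The conjugate (Young/Legendre) function `ρ*(t) = sup_{s ≥ 0} (s t − ρ s)`. -/
noncomputable def conjN (ρ : ℝ → ℝ) (t : ℝ) : ℝ :=
  sSup {y | ∃ s ≥ 0, y = s * t - ρ s}

/-- The shifted N-function `ρ_a(t) = ∫₀ᵗ ρ'(a+τ)/(a+τ) · τ dτ`. -/
noncomputable def shiftN (ρ : ℝ → ℝ) (a : ℝ) (t : ℝ) : ℝ :=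
  ∫ τ in (0:ℝ)..t, deriv ρ (a + τ) / (a + τ) * τ

/-- An elliptic N-function with characteristics `c₁, c₂`: `C¹` on `[0,∞)`,
`C²` on `(0,∞)`, and `ρ'(t) ∼ t ρ''(t)` uniformly in `t > 0`. -/
def IsElliptic (ρ : ℝ → ℝ) (c₁ c₂ : ℝ) : Prop :=
  ContDiffOn ℝ 1 ρ (Ici 0) ∧ ContDiffOn ℝ 2 ρ (Ioi 0) ∧
    ∀ t > 0, c₁ * deriv ρ t ≤ t * deriv (deriv ρ) t ∧
      t * deriv (deriv ρ) t ≤ c₂ * deriv ρ t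

open MeasureTheory

theorem MonotoneOn.mul_intervalIntegral_le {g : ℝ → ℝ} {s t : ℝ} (hg : MonotoneOn g (Icc 0 s))
    (ht : 0 ≤ t) (hts : t ≤ s) :
    s * ∫ x in (0:ℝ)..t, g x ≤ t * ∫ x in (0:ℝ)..s, g x := by
  have hg' : MonotoneOn g (uIcc 0 s) := by rwa [uIcc_of_le (ht.trans hts)]
  have hi₁ : IntervalIntegrable g volume 0 t :=
    hg'.intervalIntegrable.mono_set (uIcc_subset_uIcc left_mem_uIcc (mem_uIcc_of_le ht hts))
  have hi₂ : IntervalIntegrable g volume t s :=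
    hg'.intervalIntegrable.mono_set (uIcc_subset_uIcc (mem_uIcc_of_le ht hts) right_mem_uIcc)
  have below : ∫ x in (0:ℝ)..t, g x ≤ t * g t := by
    simpa using intervalIntegral.integral_mono_on ht hi₁ intervalIntegrable_const
      fun x hx => hg ⟨hx.1, hx.2.trans hts⟩ ⟨ht, hts⟩ hx.2
  have above : (s - t) * g t ≤ ∫ x in t..s, g x := by
    simpa using intervalIntegral.integral_mono_on hts intervalIntegrable_const hi₂
      fun x hx => hg ⟨ht, hts⟩ ⟨ht.trans hx.1, hx.2⟩ hx.1
  rw [← intervalIntegral.integral_add_adjacent_intervals hi₁ hi₂]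
  nlinarith [mul_le_mul_of_nonneg_left below (sub_nonneg.2 hts),
    mul_le_mul_of_nonneg_left above ht]

theorem MonotoneOn.intervalIntegral_le_two_mul {g : ℝ → ℝ} {t : ℝ} (hg : MonotoneOn g (Icc 0 t))
    (ht : 0 < t) :
    ∫ x in (0:ℝ)..t, g x ≤ 2 * ∫ x in t / 2..t, g x := by
  have hg' : MonotoneOn g (uIcc 0 t) := by rwa [uIcc_of_le ht.le]
  have hmid : t / 2 ∈ uIcc 0 t := mem_uIcc_of_le (by linarith) (by linarith)
  have split := intervalIntegral.integral_add_adjacent_intervals (μ := volume)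
    (hg'.intervalIntegrable.mono_set (uIcc_subset_uIcc left_mem_uIcc hmid))
    (hg'.intervalIntegrable.mono_set (uIcc_subset_uIcc hmid right_mem_uIcc))
  have half := hg.mul_intervalIntegral_le (by linarith) (by linarith : t / 2 ≤ t)
  nlinarith

theorem IsNFunction.deriv_nonneg {ρ : ℝ → ℝ} (hN : IsNFunction ρ) {x : ℝ} (hx : 0 < x) :
    0 ≤ deriv ρ x := by
  rw [← derivWithin_of_isOpen isOpen_Ioi hx]
  exact (hN.2.1.monotoneOn.mono Ioi_subset_Ici_self).derivWithin_nonneg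

namespace IsElliptic

variable {ρ : ℝ → ℝ} {c₁ c₂ : ℝ}

theorem hasDerivAt_deriv (hE : IsElliptic ρ c₁ c₂) {x : ℝ} (hx : 0 < x) :
    HasDerivAt (deriv ρ) (deriv (deriv ρ) x) x :=
  ((hE.2.1.deriv_of_isOpen isOpen_Ioi one_add_one_eq_two.le).differentiableOn one_ne_zero
    |>.differentiableAt (isOpen_Ioi.mem_nhds hx)).hasDerivAt

theorem monotoneOn_deriv (hE : IsElliptic ρ c₁ c₂) (hN : IsNFunction ρ) (hc₁ : 0 ≤ c₁) :
    MonotoneOn (deriv ρ) (Ioi 0) := by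
  refine monotoneOn_of_hasDerivWithinAt_nonneg (convex_Ioi 0)
    (fun x hx => (hE.hasDerivAt_deriv hx).continuousAt.continuousWithinAt)
    (fun x hx => (hE.hasDerivAt_deriv (interior_subset hx)).hasDerivWithinAt) fun x hx => ?_
  rw [interior_Ioi] at hx
  have hx : 0 < x := hx
  have hsecond : 0 ≤ x * deriv (deriv ρ) x :=
    (mul_nonneg hc₁ (hN.deriv_nonneg hx)).trans (hE.2.2 x hx).1
  exact nonneg_of_mul_nonneg_right (by linarith) hx

theorem antitoneOn_deriv_mul_rpow_neg (hE : IsElliptic ρ c₁ c₂) :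
    AntitoneOn (fun x => deriv ρ x * x ^ (-c₂)) (Ioi 0) := by
  have hder : ∀ x ∈ Ioi (0:ℝ), HasDerivAt (fun x => deriv ρ x * x ^ (-c₂))
      (deriv (deriv ρ) x * x ^ (-c₂) + deriv ρ x * (-c₂ * x ^ (-c₂ - 1))) x := fun x hx =>
    (hE.hasDerivAt_deriv hx).mul (Real.hasDerivAt_rpow_const (Or.inl hx.ne'))
  refine antitoneOn_of_hasDerivWithinAt_nonpos (convex_Ioi 0)
    (fun x hx => (hder x hx).continuousAt.continuousWithinAt)
    (fun x hx => (hder x (interior_subset hx)).hasDerivWithinAt) fun x hx => ?_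
  rw [interior_Ioi] at hx
  have hx : 0 < x := hx
  have hpow : x ^ (-c₂) = x * x ^ (-c₂ - 1) := by
    rw [show -c₂ = 1 + (-c₂ - 1) by ring, Real.rpow_add hx, Real.rpow_one]; ring_nf
  rw [hpow]
  nlinarith [mul_nonneg (sub_nonneg.2 (hE.2.2 x hx).2) (Real.rpow_pos_of_pos hx (-c₂ - 1)).le]

theorem deriv_le_div_rpow_mul (hE : IsElliptic ρ c₁ c₂) {x y : ℝ} (hy : 0 < y) (hyx : y ≤ x) :
    deriv ρ x ≤ (x / y) ^ c₂ * deriv ρ y := by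
  have hx := hy.trans_le hyx
  have h := hE.antitoneOn_deriv_mul_rpow_neg hy hx hyx
  simp only [Real.rpow_neg hx.le, Real.rpow_neg hy.le] at h
  rw [Real.div_rpow hx.le hy.le]
  have hxc := Real.rpow_pos_of_pos hx c₂
  have hyc := Real.rpow_pos_of_pos hy c₂
  calc deriv ρ x = deriv ρ x * (x ^ c₂)⁻¹ * x ^ c₂ := by field_simp
    _ ≤ deriv ρ y * (y ^ c₂)⁻¹ * x ^ c₂ := by gcongr
    _ = x ^ c₂ / y ^ c₂ * deriv ρ y := by field_simp

theorem deriv_le_rpow_mul (hE : IsElliptic ρ c₁ c₂) (hN : IsNFunction ρ) (hc₁ : 0 ≤ c₁)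
    (hc₂ : 0 ≤ c₂) {x y L : ℝ} (hx : 0 < x) (hy : 0 < y) (hL : 1 ≤ L) (hxy : x ≤ L * y) :
    deriv ρ x ≤ L ^ c₂ * deriv ρ y := by
  rcases le_total x y with h | h
  · calc deriv ρ x ≤ deriv ρ y := hE.monotoneOn_deriv hN hc₁ hx hy h
      _ ≤ L ^ c₂ * deriv ρ y :=
        le_mul_of_one_le_left (hN.deriv_nonneg hy) (Real.one_le_rpow hL hc₂)
  · calc deriv ρ x ≤ (x / y) ^ c₂ * deriv ρ y := hE.deriv_le_div_rpow_mul hy h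
      _ ≤ L ^ c₂ * deriv ρ y := by
        gcongr
        · exact hN.deriv_nonneg hy
        · rwa [div_le_iff₀ hy]

end IsElliptic

noncomputable def shiftNDeriv (ρ : ℝ → ℝ) (a τ : ℝ) : ℝ :=
  deriv ρ (a + τ) / (a + τ) * τ

section Shift

variable {ρ : ℝ → ℝ} {c₁ c₂ : ℝ} {a b s t : ℝ}

theorem shiftN_eq_integral_shiftNDeriv : shiftN ρ a t = ∫ τ in (0:ℝ)..t, shiftNDeriv ρ a τ :=
  rfl

theorem shiftNDeriv_nonneg (hN : IsNFunction ρ) (ha : 0 ≤ a) {τ : ℝ} (hτ : 0 ≤ τ) :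
    0 ≤ shiftNDeriv ρ a τ := by
  rcases hτ.eq_or_lt with rfl | hτ
  · simp [shiftNDeriv]
  · have := hN.deriv_nonneg (show 0 < a + τ by linarith)
    unfold shiftNDeriv
    positivity

theorem monotoneOn_shiftNDeriv (hN : IsNFunction ρ) (hE : IsElliptic ρ c₁ c₂) (hc₁ : 0 ≤ c₁)
    (ha : 0 ≤ a) : MonotoneOn (shiftNDeriv ρ a) (Ici 0) := by
  intro x hx y hy hxy
  rcases (mem_Ici.1 hx).eq_or_lt with rfl | hx
  · simpa [shiftNDeriv] using shiftNDeriv_nonneg hN ha hy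
  have hax : 0 < a + x := by linarith
  have hay : 0 < a + y := by linarith
  have hratio : x / (a + x) ≤ y / (a + y) := by
    rw [div_le_div_iff₀ hax hay]; nlinarith
  calc shiftNDeriv ρ a x = deriv ρ (a + x) * (x / (a + x)) := by
        rw [shiftNDeriv]; ring
    _ ≤ deriv ρ (a + y) * (y / (a + y)) := by
        gcongr
        · exact hN.deriv_nonneg hay
        · exact hE.monotoneOn_deriv hN hc₁ hax hay (by linarith)
    _ = shiftNDeriv ρ a y := by rw [shiftNDeriv]; ring

theorem intervalIntegrable_shiftNDeriv (hN : IsNFunction ρ) (hE : IsElliptic ρ c₁ c₂)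
    (hc₁ : 0 ≤ c₁) (ha : 0 ≤ a) {u v : ℝ} (hu : 0 ≤ u) (hv : 0 ≤ v) :
    IntervalIntegrable (shiftNDeriv ρ a) volume u v :=
  ((monotoneOn_shiftNDeriv hN hE hc₁ ha).mono fun _ hx => le_trans (le_min hu hv) hx.1)
    |>.intervalIntegrable

theorem shiftN_nonneg (hN : IsNFunction ρ) (ha : 0 ≤ a) (ht : 0 ≤ t) : 0 ≤ shiftN ρ a t :=
  intervalIntegral.integral_nonneg ht fun _ hτ => shiftNDeriv_nonneg hN ha hτ.1

theorem shiftNDeriv_le_rpow_mul (hN : IsNFunction ρ) (hE : IsElliptic ρ c₁ c₂) (hc₁ : 0 ≤ c₁)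
    (hc₂ : 0 ≤ c₂) {L τ : ℝ} (ha : 0 ≤ a) (hb : 0 ≤ b) (hτ : 0 < τ) (hL : 1 ≤ L)
    (hab : a + τ ≤ L * (b + τ)) (hba : b + τ ≤ L * (a + τ)) :
    shiftNDeriv ρ a τ ≤ L ^ (c₂ + 1) * shiftNDeriv ρ b τ := by
  have hat : 0 < a + τ := by linarith
  have hbt : 0 < b + τ := by linarith
  have hderiv := hE.deriv_le_rpow_mul hN hc₁ hc₂ hat hbt hL hab
  have hinv : 1 / (a + τ) ≤ L / (b + τ) := by
    rw [div_le_div_iff₀ hat hbt]; linarith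
  calc shiftNDeriv ρ a τ = deriv ρ (a + τ) * (1 / (a + τ)) * τ := by
        rw [shiftNDeriv]; ring
    _ ≤ (L ^ c₂ * deriv ρ (b + τ)) * (L / (b + τ)) * τ := by
        gcongr
        exact mul_nonneg (by positivity) (hN.deriv_nonneg hbt)
    _ = L ^ (c₂ + 1) * shiftNDeriv ρ b τ := by
        rw [shiftNDeriv, Real.rpow_add_one (by linarith)]; ring

theorem shiftN_le_mul_shiftN (hN : IsNFunction ρ) (hE : IsElliptic ρ c₁ c₂) (hc₁ : 0 ≤ c₁)
    {ε : ℝ} (ha : 0 ≤ a) (hε₀ : 0 < ε) (hε₁ : ε ≤ 1) (ht : 0 ≤ t) (hts : t ≤ ε * s) :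
    shiftN ρ a t ≤ ε * shiftN ρ a s := by
  rcases ht.eq_or_lt with rfl | ht
  · have hs : 0 ≤ s := nonneg_of_mul_nonneg_right hts hε₀
    simpa [shiftN] using mul_nonneg hε₀.le (shiftN_nonneg hN ha hs)
  have hs : 0 < s := pos_of_mul_pos_right (ht.trans_le hts) hε₀.le
  have havg := (monotoneOn_shiftNDeriv hN hE hc₁ ha).mono Icc_subset_Ici_self
    |>.mul_intervalIntegral_le ht.le (hts.trans (by nlinarith))
  rw [← shiftN_eq_integral_shiftNDeriv, ← shiftN_eq_integral_shiftNDeriv] at havg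
  refine le_of_mul_le_mul_left ?_ hs
  nlinarith [shiftN_nonneg hN ha hs.le]

theorem shiftN_le_rpow_mul_shiftN (hN : IsNFunction ρ) (hE : IsElliptic ρ c₁ c₂) (hc₁ : 0 ≤ c₁)
    (hc₂ : 0 ≤ c₂) {M : ℝ} (ha : 0 ≤ a) (hb : 0 ≤ b) (ht : 0 ≤ t) (hM : 0 ≤ M)
    (hab : |a - b| ≤ M * t) :
    shiftN ρ a t ≤ 2 * (1 + 2 * M) ^ (c₂ + 1) * shiftN ρ b t := by
  rcases ht.eq_or_lt with rfl | ht
  · simp [shiftN]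
  set L := 1 + 2 * M with hL
  have hcompare : ∀ τ ∈ Icc (t / 2) t, shiftNDeriv ρ a τ ≤ L ^ (c₂ + 1) * shiftNDeriv ρ b τ := by
    intro τ hτ
    have hMt : M * t ≤ 2 * M * τ := by nlinarith [hτ.1]
    have hMa : 0 ≤ 2 * M * a := by positivity
    have hMb : 0 ≤ 2 * M * b := by positivity
    obtain ⟨hab₁, hab₂⟩ := abs_le.1 hab
    exact shiftNDeriv_le_rpow_mul hN hE hc₁ hc₂ ha hb (by linarith [hτ.1]) (by linarith)
      (by rw [hL]; linarith) (by rw [hL]; linarith)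
  have hint := fun c (hc : 0 ≤ c) => intervalIntegrable_shiftNDeriv hN hE hc₁ hc
    (by linarith : (0:ℝ) ≤ t / 2) ht.le
  calc shiftN ρ a t ≤ 2 * ∫ τ in t / 2..t, shiftNDeriv ρ a τ :=
        (monotoneOn_shiftNDeriv hN hE hc₁ ha).mono Icc_subset_Ici_self
          |>.intervalIntegral_le_two_mul ht
    _ ≤ 2 * ∫ τ in t / 2..t, L ^ (c₂ + 1) * shiftNDeriv ρ b τ := by
        gcongr
        exact intervalIntegral.integral_mono_on (by linarith) (hint a ha)
          ((hint b hb).const_mul _) hcompare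
    _ = 2 * L ^ (c₂ + 1) * ∫ τ in t / 2..t, shiftNDeriv ρ b τ := by
        rw [intervalIntegral.integral_const_mul]; ring
    _ ≤ 2 * L ^ (c₂ + 1) * shiftN ρ b t := by
        gcongr
        exact intervalIntegral.integral_mono_interval (by linarith) (by linarith) le_rfl
          ((ae_restrict_iff' measurableSet_Ioc).2 <|
            Eventually.of_forall fun τ hτ => shiftNDeriv_nonneg hN hb hτ.1.le)
          (intervalIntegrable_shiftNDeriv hN hE hc₁ hb le_rfl ht.le)

end Shift

/-- Change of shift. For an elliptic N-function `ρ` and every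
`δ > 0` there is `C_δ ≥ 1` (depending only on `δ` and the characteristics of `ρ`)
with `ρ_{|a|}(t) ≤ C_δ ρ_{|b|}(t) + δ ρ_{|a|}(|a − b|)` for all vectors
`a, b ∈ ℝⁿ` and all `t ≥ 0`. -/
theorem statement6 (n : ℕ) (ρ : ℝ → ℝ) (c₁ c₂ : ℝ) (hc₁ : 0 < c₁) (hc₂ : 0 < c₂)
    (hN : IsNFunction ρ) (hE : IsElliptic ρ c₁ c₂) (δ : ℝ) (hδ : 0 < δ) :
    ∃ C ≥ (1:ℝ), ∀ a b : EuclideanSpace ℝ (Fin n), ∀ t ≥ (0:ℝ),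
      shiftN ρ ‖a‖ t ≤ C * shiftN ρ ‖b‖ t + δ * shiftN ρ ‖a‖ ‖a - b‖ := by
  set ε := min δ 1
  have hε₀ : 0 < ε := lt_min hδ one_pos
  have hL : 1 ≤ (1 + 2 * ε⁻¹) ^ (c₂ + 1) :=
    Real.one_le_rpow (le_add_of_nonneg_right (by positivity)) (by linarith)
  refine ⟨2 * (1 + 2 * ε⁻¹) ^ (c₂ + 1), by linarith, fun a b t ht => ?_⟩
  have hb_nonneg := shiftN_nonneg hN (norm_nonneg b) ht
  have has_nonneg := shiftN_nonneg hN (norm_nonneg a) (norm_nonneg (a - b))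
  rcases le_or_gt t (ε * ‖a - b‖) with hsmall | hlarge
  · have := shiftN_le_mul_shiftN hN hE hc₁.le (norm_nonneg a) hε₀ (min_le_right _ _) ht hsmall
    nlinarith [mul_le_mul_of_nonneg_right (min_le_left δ 1) has_nonneg]
  · have hab : |‖a‖ - ‖b‖| ≤ ε⁻¹ * t := (abs_norm_sub_norm_le a b).trans <| by
      rw [inv_mul_eq_div, le_div_iff₀ hε₀]; linarith
    have := shiftN_le_rpow_mul_shiftN hN hE hc₁.le hc₂.le (norm_nonneg a) (norm_nonneg b) ht
      (inv_nonneg.2 hε₀.le) hab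
    nlinarith
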